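/- (Flagged Jacobi–Trudi identity, even orthogonal case.) Let n ≥ 1, let R be a commutative ring, let x_1, …, x_n be invertible elements of R with x̄_i := x_i^{−1}, let a = (a_1, a_2, …) be a sequence in R, and let λ = (λ_1 ≥ … ≥ λ_n ≥ 0) be a partition with at most n parts. Then det_{1≤i,j≤n} ( (x_i|a)^{λ_j+n−j} + (x̄_i|a)^{λ_j+n−j} ) = ε · ∏_{1≤i<j≤n}(x_i + x̄_i − x_j − x̄_j) · det_{1≤i,j≤n} ( h^{eo}_{λ_j−j+i}(x^{(i)}, x̄^{(i)}|a) ), where ε = 2 if λ_n = 0 and ε = 1 if λ_n > 0, and x^{(i)} := (x_i, …, x_n), x̄^{(i)} := (x̄_i, …, x̄_n). -/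

import Mathlib

/-!
Put `p_l = x_l + x_l⁻¹` and `G_l = 1 / ((1 - x_l t)(1 - x_l⁻¹ t)) = 1 / (1 - p_l t + t²)`.
The factorial power `(x|a)^m` is the coefficient of `t^m` in `(1 - x t)⁻¹ ∏_{j ≤ m} (1 + a_j t)`,
and `(1 - x t)⁻¹ + (1 - x⁻¹ t)⁻¹ = 1 + (1 - t²) G`. Newton's divided-difference expansion of
`∏_{l > i} (1 - p_l t + t²)` at the nodes `p_i, p_{i+1}, …` gives
`G_i = ∑_{k ≥ i} ∏_{l > k} (p_i - p_l) · t^(n-1-k) G_k ⋯ G_{n-1}`.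
Hence the matrix on the left is an upper triangular matrix with diagonal `∏_{l > i} (p_i - p_l)`
times the matrix of the `h^{eo}` in the variables `x_k, …, x_n`, except that its corner entry
is `2` instead of `h^{eo}_0 = 1` when `λ_n = 0`.
-/

open Finset

noncomputable def geom {R : Type*} [CommRing R] (x : R) : PowerSeries R :=
  PowerSeries.mk fun k => x ^ k

noncomputable def lin {R : Type*} [CommRing R] (a : R) : PowerSeries R :=
  1 + PowerSeries.C (R := R) a * PowerSeries.X

noncomputable def facpow {R : Type*} [CommRing R] (x : R) (a : ℕ → R) (m : ℕ) : R :=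
  ∏ j ∈ Finset.range m, (x + a (j + 1))

noncomputable def hgl {R : Type*} [CommRing R] {n : ℕ} (x : Fin n → R) (a : ℕ → R) (m : ℤ) : R :=
  if 0 ≤ m then
    PowerSeries.coeff (R := R) m.toNat
      ((∏ i, geom (x i)) * ∏ j ∈ Finset.range (n + m.toNat - 1), lin (a (j + 1)))
  else 0

noncomputable def hsp {R : Type*} [CommRing R] {n : ℕ} (x : Fin n → Rˣ) (a : ℕ → R) (m : ℤ) : R :=
  if 0 ≤ m then
    PowerSeries.coeff (R := R) m.toNat
      ((∏ i, geom ((x i : R)) * geom (((x i)⁻¹ : Rˣ) : R)) *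
        ∏ j ∈ Finset.range (n + m.toNat - 1), lin (a (j + 1)))
  else 0

noncomputable def hoo {R : Type*} [CommRing R] {n : ℕ} (x : Fin n → Rˣ) (a : ℕ → R) (m : ℤ) : R :=
  if 0 ≤ m then
    PowerSeries.coeff (R := R) m.toNat
      ((1 + PowerSeries.X) * (∏ i, geom ((x i : R)) * geom (((x i)⁻¹ : Rˣ) : R)) *
        ∏ j ∈ Finset.range (n + m.toNat - 1), lin (a (j + 1)))
  else 0

noncomputable def heo {R : Type*} [CommRing R] {n : ℕ} (x : Fin n → Rˣ) (a : ℕ → R) (m : ℤ) : R :=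
  if 0 ≤ m then
    if h : n = 1 then
      (PowerSeries.coeff (R := R) m.toNat
        ((geom ((x ⟨0, by omega⟩ : Rˣ) : R) + geom (((x ⟨0, by omega⟩)⁻¹ : Rˣ) : R)) *
          ∏ j ∈ Finset.range m.toNat, lin (a (j + 1))))
        - (if m = 0 then 1 else 0)
    else
      PowerSeries.coeff (R := R) m.toNat
        ((1 - PowerSeries.X ^ 2) * (∏ i, geom ((x i : R)) * geom (((x i)⁻¹ : Rˣ) : R)) *
          ∏ j ∈ Finset.range (n + m.toNat - 1), lin (a (j + 1)))
  else 0

noncomputable def heod {R : Type*} [CommRing R] {n : ℕ} (x : Fin n → Rˣ) (a : ℕ → R) (m : ℤ) : R :=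
  if 0 < m then
    if h : 0 < n then
      PowerSeries.coeff (R := R) m.toNat
        ((geom ((x ⟨0, h⟩ : Rˣ) : R) - geom (((x ⟨0, h⟩)⁻¹ : Rˣ) : R)) *
          (∏ i ∈ Finset.univ.filter (fun i : Fin n => i ≠ ⟨0, h⟩),
            geom ((x i : R)) * geom (((x i)⁻¹ : Rˣ) : R)) *
          ∏ j ∈ Finset.range (n + m.toNat - 1), lin (a (j + 1)))
    else 0
  else 0

open PowerSeries

section GeometricSeries

variable {R : Type*} [CommRing R]

theorem one_sub_C_mul_X_mul_geom (x : R) : (1 - C x * X) * geom x = 1 := by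
  have h : geom x = rescale x (mk 1) := by
    rw [rescale_mk]; ext k; simp [geom]
  rw [h, ← rescale_X, ← map_one (rescale x), ← map_sub, ← map_mul, mul_comm,
    mk_one_mul_one_sub_eq_one]

theorem quadratic_mul_geom_mul_geom {x y : R} (h : x * y = 1) :
    (1 - C (x + y) * X + X ^ 2) * (geom x * geom y) = 1 := by
  have hC : C x * C y = 1 := by rw [← map_mul, h, map_one]
  rw [map_add]
  linear_combination (1 - C y * X) * geom y * one_sub_C_mul_X_mul_geom x +
    one_sub_C_mul_X_mul_geom y - X ^ 2 * (geom x * geom y) * hC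

theorem geom_add_geom_of_mul_eq_one {x y : R} (h : x * y = 1) :
    geom x + geom y = 1 + (1 - X ^ 2) * (geom x * geom y) := by
  have hq := quadratic_mul_geom_mul_geom h
  rw [map_add] at hq
  linear_combination (-geom y) * one_sub_C_mul_X_mul_geom x +
    (-geom x) * one_sub_C_mul_X_mul_geom y + hq

theorem coeff_prod_lin_of_lt (b : ℕ → R) {m k : ℕ} (hk : m < k) :
    coeff k (∏ j ∈ range m, lin (b j)) = 0 := by
  induction m generalizing k with
  | zero => simp [coeff_one, hk.ne']
  | succ m ih =>
    obtain ⟨k, rfl⟩ : ∃ k', k = k' + 1 := ⟨k - 1, by omega⟩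
    rw [prod_range_succ, lin, mul_add, mul_one, ← mul_assoc, map_add, coeff_succ_mul_X,
      coeff_mul_C, ih (by omega), ih (by omega), zero_mul, add_zero]

theorem coeff_geom_mul_prod_lin (x : R) (b : ℕ → R) (m : ℕ) :
    coeff m (geom x * ∏ j ∈ range m, lin (b j)) = ∏ j ∈ range m, (x + b j) := by
  induction m with
  | zero => simp [geom]
  | succ m ih =>
    have hshift : coeff (m + 1) (geom x * ∏ j ∈ range m, lin (b j)) =
        x * coeff m (geom x * ∏ j ∈ range m, lin (b j)) := by
      have hgeom : geom x = 1 + C x * X * geom x := by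
        linear_combination one_sub_C_mul_X_mul_geom x
      conv_lhs => rw [hgeom]
      rw [add_mul, one_mul, map_add, coeff_prod_lin_of_lt b (by omega), zero_add, mul_assoc,
        mul_assoc, coeff_C_mul, coeff_succ_X_mul]
    rw [prod_range_succ, lin, mul_add, mul_one, ← mul_assoc, mul_add, ← mul_assoc, ← mul_assoc,
      map_add, coeff_succ_mul_X, coeff_mul_C, hshift, ih, prod_range_succ]
    ring

end GeometricSeries

theorem eq_sum_prod_sub_mul_prod_of_mul_eq_one {S : Type*} [CommRing S] {a g : ℕ → S}
    {i n : ℕ} (hi : i < n) (h : ∀ l ∈ Ico i n, a l * g l = 1) :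
    g i = ∑ k ∈ Ico i n, (∏ l ∈ Ioo k n, (a l - a i)) * ∏ l ∈ Ico k n, g l := by
  -- `r k = ∏_{k ≤ l < n} (a l - a i) g l`, so `a i` times the sum telescopes.
  set r : ℕ → S := fun k => ∏ l ∈ Ico k n, (1 - a i * g l)
  have hstep : ∀ k ∈ Ico i n,
      a i * ((∏ l ∈ Ioo k n, (a l - a i)) * ∏ l ∈ Ico k n, g l) = r (k + 1) - r k := by
    intro k hk
    have hkn : k < n := (mem_Ico.mp hk).2
    have htail : ∏ l ∈ Ico (k + 1) n, (a l - a i) * g l = r (k + 1) := by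
      refine prod_congr rfl fun l hl => ?_
      linear_combination h l (by simp only [mem_Ico] at hk hl ⊢; omega)
    have hrk : r k = (1 - a i * g k) * r (k + 1) := prod_eq_prod_Ico_succ_bot hkn _
    rw [hrk, ← Ico_add_one_left_eq_Ioo, prod_eq_prod_Ico_succ_bot hkn, ← htail, prod_mul_distrib]
    ring
  have hri : r i = 0 := prod_eq_zero (left_mem_Ico.mpr hi) (by rw [h i (left_mem_Ico.mpr hi)]; ring)
  have hrn : r n = 1 := by simp [r]
  have hsum : a i * ∑ k ∈ Ico i n, (∏ l ∈ Ioo k n, (a l - a i)) * ∏ l ∈ Ico k n, g l = 1 := by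
    rw [mul_sum, sum_congr rfl hstep, sum_Ico_sub r hi.le, hri, hrn, sub_zero]
  linear_combination (∑ k ∈ Ico i n, (∏ l ∈ Ioo k n, (a l - a i)) * ∏ l ∈ Ico k n, g l) *
    h i (left_mem_Ico.mpr hi) - g i * hsum

section EvenOrthogonal

variable {R : Type*} [CommRing R]

def newtonCoeff (y : ℕ → Rˣ) (n i k : ℕ) : R :=
  ∏ l ∈ Ioo k n, ((y i : R) + (((y i)⁻¹ : Rˣ) : R) - (y l : R) - (((y l)⁻¹ : Rˣ) : R))

-- The `1` of `geom x + geom x⁻¹ = 1 + (1 - X²) geom x geom x⁻¹` is put at the last index,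
-- whose Newton coefficient is `1`.
noncomputable def evenTail (y : ℕ → Rˣ) (n k : ℕ) : PowerSeries R :=
  (1 - X ^ 2) * (∏ l ∈ Ico k n, geom (y l : R) * geom (((y l)⁻¹ : Rˣ) : R)) +
    if k = n - 1 then 1 else 0

noncomputable def linProd (a : ℕ → R) (m : ℕ) : PowerSeries R :=
  ∏ j ∈ range m, lin (a (j + 1))

theorem facpow_eq_coeff (x : R) (a : ℕ → R) (m : ℕ) :
    facpow x a m = coeff m (geom x * linProd a m) :=
  (coeff_geom_mul_prod_lin x (fun j => a (j + 1)) m).symm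

theorem geom_add_geom_inv_eq_sum (y : ℕ → Rˣ) {i n : ℕ} (hi : i < n) :
    geom (y i : R) + geom (((y i)⁻¹ : Rˣ) : R) =
      ∑ k ∈ Ico i n, C (newtonCoeff y n i k) * X ^ (n - 1 - k) * evenTail y n k := by
  set p : ℕ → R := fun l => (y l : R) + (((y l)⁻¹ : Rˣ) : R)
  have hexp := eq_sum_prod_sub_mul_prod_of_mul_eq_one (a := fun l => 1 - C (p l) * X + X ^ 2)
    (g := fun l => geom (y l : R) * geom (((y l)⁻¹ : Rˣ) : R)) hi
    (fun l _ => quadratic_mul_geom_mul_geom (Units.mul_inv _))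
  have hcoeff : ∀ k, ∏ l ∈ Ioo k n, ((1 - C (p l) * X + X ^ 2) - (1 - C (p i) * X + X ^ 2)) =
      C (newtonCoeff y n i k) * X ^ (n - 1 - k) := by
    intro k
    rw [show n - 1 - k = #(Ioo k n) by simp; omega, newtonCoeff, map_prod, ← prod_const,
      ← prod_mul_distrib]
    refine prod_congr rfl fun l _ => ?_
    simp only [p, map_sub, map_add]
    ring
  simp only [hcoeff] at hexp
  have hlast : newtonCoeff y n i (n - 1) = 1 := by
    rw [newtonCoeff, ← Ico_add_one_left_eq_Ioo, Nat.sub_add_cancel (by omega), Ico_self,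
      prod_empty]
  rw [geom_add_geom_of_mul_eq_one (Units.mul_inv _), hexp]
  simp only [evenTail, mul_add, sum_add_distrib, mul_ite, mul_one, mul_zero, sum_ite_eq',
    mem_Ico, hlast]
  rw [if_pos ⟨by omega, by omega⟩, Nat.sub_self, pow_zero, map_one, mul_one, mul_sum, add_comm]
  exact congrArg (· + 1) (sum_congr rfl fun k _ => by ring)

theorem facpow_add_facpow_inv_eq_sum (y : ℕ → Rˣ) (a : ℕ → R) {i n : ℕ} (hi : i < n) (m : ℕ) :
    facpow (y i : R) a m + facpow (((y i)⁻¹ : Rˣ) : R) a m =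
      ∑ k ∈ Ico i n, newtonCoeff y n i k *
        coeff m (X ^ (n - 1 - k) * evenTail y n k * linProd a m) := by
  rw [facpow_eq_coeff, facpow_eq_coeff, ← map_add, ← add_mul, geom_add_geom_inv_eq_sum y hi,
    sum_mul, map_sum]
  refine sum_congr rfl fun k _ => ?_
  rw [mul_assoc, mul_assoc, coeff_C_mul, mul_assoc]

def newtonMatrix (y : ℕ → Rˣ) (n : ℕ) : Matrix (Fin n) (Fin n) R :=
  Matrix.of fun i k => if i ≤ k then newtonCoeff y n i k else 0

noncomputable def evenCoeffMatrix (y : ℕ → Rˣ) (a : ℕ → R) {n : ℕ} (e : Fin n → ℕ) :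
    Matrix (Fin n) (Fin n) R :=
  Matrix.of fun k j => coeff (e j) (X ^ (n - 1 - k) * evenTail y n k * linProd a (e j))

theorem facpow_matrix_eq_mul (y : ℕ → Rˣ) (a : ℕ → R) {n : ℕ} (e : Fin n → ℕ) :
    Matrix.of (fun i j : Fin n => facpow (y i : R) a (e j) + facpow (((y i)⁻¹ : Rˣ) : R) a (e j)) =
      newtonMatrix y n * evenCoeffMatrix y a e := by
  ext i j
  rw [Matrix.of_apply, facpow_add_facpow_inv_eq_sum y a i.isLt, Matrix.mul_apply,
    ← Fin.map_valEmbedding_Ici, sum_map]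
  simp only [newtonMatrix, evenCoeffMatrix, Matrix.of_apply, ite_mul, zero_mul]
  rw [← sum_filter, filter_le_eq_Ici]
  rfl

theorem det_newtonMatrix (y : ℕ → Rˣ) (n : ℕ) :
    (newtonMatrix y n).det = ∏ i : Fin n, ∏ j ∈ Ioi i,
      ((y i : R) + (((y i)⁻¹ : Rˣ) : R) - (y j : R) - (((y j)⁻¹ : Rˣ) : R)) := by
  rw [Matrix.det_of_isUpperTriangular]
  · refine prod_congr rfl fun i _ => ?_
    rw [newtonMatrix, Matrix.of_apply, if_pos le_rfl, newtonCoeff, ← Fin.map_valEmbedding_Ioi,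
      prod_map]
    rfl
  · intro i k hki
    exact if_neg (not_le.mpr hki)

theorem heo_of_neg {N : ℕ} (z : Fin N → Rˣ) (a : ℕ → R) {m : ℤ} (hm : m < 0) : heo z a m = 0 :=
  if_neg (not_le.mpr hm)

theorem heo_zero_of_eq_one {N : ℕ} (hN : N = 1) (z : Fin N → Rˣ) (a : ℕ → R) : heo z a 0 = 1 := by
  subst hN
  simp [heo, geom]

theorem heo_natCast_add {N : ℕ} (z : Fin N → Rˣ) (a : ℕ → R) (m : ℕ) :
    heo z a m + (if N = 1 ∧ m = 0 then 1 else 0) =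
      coeff m (((1 - X ^ 2) * ∏ i, geom (z i : R) * geom (((z i)⁻¹ : Rˣ) : R) +
        if N = 1 then 1 else 0) * linProd a (N + m - 1)) := by
  rw [heo, if_pos (Int.natCast_nonneg m), Int.toNat_natCast]
  by_cases hN : N = 1
  · subst hN
    rw [dif_pos rfl, if_pos rfl, geom_add_geom_of_mul_eq_one (Units.mul_inv _), Fin.prod_univ_one,
      Nat.add_sub_cancel_left, linProd, add_comm _ (1 : PowerSeries R)]
    simp only [Nat.cast_eq_zero, true_and, sub_add_cancel]
    rfl
  · rw [dif_neg hN, if_neg (by tauto), if_neg hN, add_zero, add_zero]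
    rfl

theorem prod_geom_tail_eq (y : ℕ → Rˣ) (n k : ℕ) :
    ∏ l : Fin (n - k), geom (y (k + l) : R) * geom (((y (k + l))⁻¹ : Rˣ) : R) =
      ∏ l ∈ Ico k n, geom (y l : R) * geom (((y l)⁻¹ : Rˣ) : R) := by
  rw [Fin.prod_univ_eq_prod_range (fun l => geom (y (k + l) : R) * geom (((y (k + l))⁻¹ : Rˣ) : R)),
    prod_Ico_eq_prod_range]

theorem coeff_evenTail_eq_heo (y : ℕ → Rˣ) (a : ℕ → R) {n k : ℕ} (hk : k < n) (m : ℤ) (M : ℕ)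
    (hM : (M : ℤ) = m + (n - 1 - k : ℕ)) :
    coeff M (X ^ (n - 1 - k) * evenTail y n k * linProd a M) =
      heo (fun l : Fin (n - k) => y (k + l)) a m + if k = n - 1 ∧ M = 0 then 1 else 0 := by
  rw [mul_assoc, coeff_X_pow_mul']
  rcases lt_or_ge m 0 with hm | hm
  · rw [if_neg (by omega), heo_of_neg _ _ hm, if_neg (by omega), add_zero]
  lift m to ℕ using hm
  have hlast : n - k = 1 ↔ k = n - 1 := by omega
  have hcorner : k = n - 1 ∧ m = 0 ↔ k = n - 1 ∧ M = 0 := by omega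
  have h := heo_natCast_add (fun l : Fin (n - k) => y (k + l)) a m
  rw [prod_geom_tail_eq, show n - k + m - 1 = M by omega] at h
  simp only [hlast, hcorner] at h
  rw [if_pos (by omega), show M - (n - 1 - k) = m by omega, evenTail, h]

noncomputable def heoMatrix (y : ℕ → Rˣ) (a : ℕ → R) {n : ℕ} (lam : Fin n → ℕ) :
    Matrix (Fin n) (Fin n) R :=
  Matrix.of fun i j => heo (fun k : Fin (n - i) => y (i + k)) a ((lam j : ℤ) - (j : ℕ) + (i : ℕ))

theorem evenCoeffMatrix_eq_updateCol (y : ℕ → Rˣ) (a : ℕ → R) {n : ℕ} (lam : Fin n → ℕ)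
    (last : Fin n) (hlast : (last : ℕ) = n - 1) :
    evenCoeffMatrix y a (fun j : Fin n => lam j + (n - 1 - j)) =
      (heoMatrix y a lam).updateCol last
        ((if lam last = 0 then (2 : R) else 1) • fun k => heoMatrix y a lam k last) := by
  set H := heoMatrix y a lam
  ext k j
  have hentry : evenCoeffMatrix y a (fun j : Fin n => lam j + (n - 1 - j)) k j =
      H k j + if (k : ℕ) = n - 1 ∧ lam j + (n - 1 - j) = 0 then 1 else 0 :=
    coeff_evenTail_eq_heo y a k.isLt _ _ (by push_cast; omega)
  rw [hentry, Matrix.updateCol_apply]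
  by_cases hj : j = last
  swap
  · have : (j : ℕ) ≠ n - 1 := fun h => hj (Fin.ext (h.trans hlast.symm))
    rw [if_neg hj, if_neg (by omega), add_zero]
  subst hj
  rw [if_pos rfl, Pi.smul_apply, smul_eq_mul]
  by_cases h0 : lam j = 0
  swap
  · rw [if_neg h0, if_neg (by omega), add_zero, one_mul]
  rw [if_pos h0]
  by_cases hk : (k : ℕ) = n - 1
  · have hH : H k j = 1 := by
      simp only [H, heoMatrix, Matrix.of_apply]
      rw [show ((lam j : ℤ) - (j : ℕ) + (k : ℕ)) = 0 by omega]
      exact heo_zero_of_eq_one (by omega) _ _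
    rw [if_pos ⟨hk, by omega⟩, hH]
    norm_num
  · have hH : H k j = 0 := by
      simp only [H, heoMatrix, Matrix.of_apply]
      exact heo_of_neg _ _ (by omega)
    rw [if_neg (fun h => hk h.1), hH]
    norm_num

end EvenOrthogonal

/-- flagged Jacobi-Trudi identity, even orthogonal case. -/
theorem flagged_jacobi_trudi_eo {R : Type*} [CommRing R] (n : ℕ) (hn : 1 ≤ n)
    (x : Fin n → Rˣ) (a : ℕ → R) (lam : Fin n → ℕ) :
    Matrix.det (Matrix.of fun i j : Fin n =>
        facpow ((x i : R)) a (lam j + (n - 1 - (j : ℕ)))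
          + facpow ((((x i)⁻¹ : Rˣ) : R)) a (lam j + (n - 1 - (j : ℕ)))) =
      (if lam ⟨n - 1, by omega⟩ = 0 then (2 : R) else 1) *
      (∏ i : Fin n, ∏ j ∈ Finset.Ioi i,
          ((x i : R) + (((x i)⁻¹ : Rˣ) : R) - (x j : R) - (((x j)⁻¹ : Rˣ) : R))) *
        Matrix.det (Matrix.of fun i j : Fin n =>
          heo (fun k : Fin (n - (i : ℕ)) =>
              x ⟨(i : ℕ) + (k : ℕ), by have := i.isLt; have := k.isLt; omega⟩) a
            ((lam j : ℤ) - (j : ℕ) + (i : ℕ))) := by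
  obtain ⟨y, hy⟩ : ∃ y : ℕ → Rˣ, ∀ i : Fin n, y i = x i :=
    ⟨Function.extend Fin.val x 1, Fin.val_injective.extend_apply x 1⟩
  simp only [← hy]
  rw [facpow_matrix_eq_mul y a (fun j => lam j + (n - 1 - j)), Matrix.det_mul, det_newtonMatrix,
    evenCoeffMatrix_eq_updateCol y a lam ⟨n - 1, by omega⟩ rfl, Matrix.det_updateCol_smul,
    Matrix.updateCol_eq_self, heoMatrix]
  ring
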